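/- Let X be a δ-hyperbolic geodesic metric space, let f ∈ Isom(X) be a hyperbolic isometry with repelling fixed point A_- ∈ ∂X, let x ∈ X, set A = { f^n x : n ∈ ℤ } and, for z ∈ X, let π_z = { x' ∈ A : d(x',z) = inf_{a ∈ A} d(a,z) }. Let U_- be a neighborhood of A_- in X̄. Then there exists M_0 ∈ ℤ such that for every z ∈ X with z ∉ U_- and every m ∈ ℤ with f^m x ∈ π_z, we have m ≥ M_0. -/

import Mathlib

/-!
If points `z_j ∉ U₋` had nearest orbit points `f^{m_j} x` with `m_j → -∞`, then, `f` being
hyperbolic, `d(f^{m_j} x, x) ≥ t |m_j|`; as `f^{m_j} x` is at least as close to `z_j` as `x`, the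
Gromov product `(f^{m_j} x · z_j)_w ≥ (t |m_j| - 2 d(x, w)) / 2` tends to infinity. By the
four-point condition `(z_j)` is then equivalent to the backward orbit `(f^{-n} x)`, which
represents `A₋`, so `z_j → A₋` in `X̄` and `z_j ∈ U₋` for large `j`.

The delicate step is that a sequence of `X` converges in `X̄` to the boundary point it
represents; this needs a diagonal choice of representatives.
-/

open Filter Metric Set

noncomputable section

universe u

variable {X : Type u} [MetricSpace X]

/-- The Gromov product `(x·y)_w = ½(d(x,w) + d(w,y) − d(x,y))`. -/
def gromovProduct (w x y : X) : ℝ := (dist x w + dist w y - dist x y) / 2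

/-- `γ` is a geodesic from `x` to `y`, parametrized by arc length on `[0, dist x y]`. -/
structure IsGeodesicSegment (γ : ℝ → X) (x y : X) : Prop where
  source : γ 0 = x
  target : γ (dist x y) = y
  isom : ∀ ⦃s t : ℝ⦄, s ∈ Set.Icc (0 : ℝ) (dist x y) → t ∈ Set.Icc (0 : ℝ) (dist x y) →
    dist (γ s) (γ t) = |s - t|

/-- A geodesic metric space is `δ`-hyperbolic: every pair of points is joined by a
geodesic, every geodesic triangle is `δ`-slim, every geodesic triangle has insize at
most `δ`, and the Gromov product is `δ`-hyperbolic. -/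
structure IsDeltaHyperbolic (X : Type u) [MetricSpace X] (δ : ℝ) : Prop where
  delta_nonneg : 0 ≤ δ
  geodesic : ∀ x y : X, ∃ γ : ℝ → X, IsGeodesicSegment γ x y
  slim : ∀ (x y z : X) (α β γ : ℝ → X),
    IsGeodesicSegment α y z → IsGeodesicSegment β z x → IsGeodesicSegment γ x y →
    ∀ s ∈ Set.Icc (0 : ℝ) (dist y z),
      (∃ t ∈ Set.Icc (0 : ℝ) (dist z x), dist (α s) (β t) ≤ δ) ∨
      (∃ t ∈ Set.Icc (0 : ℝ) (dist x y), dist (α s) (γ t) ≤ δ)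
  insize : ∀ (x y z : X) (α β γ : ℝ → X),
    IsGeodesicSegment α y z → IsGeodesicSegment β z x → IsGeodesicSegment γ x y →
    dist (α (gromovProduct y x z)) (β (gromovProduct z x y)) ≤ δ ∧
    dist (β (gromovProduct z x y)) (γ (gromovProduct x y z)) ≤ δ ∧
    dist (γ (gromovProduct x y z)) (α (gromovProduct y x z)) ≤ δ
  gromov : ∀ w x y z : X,
    min (gromovProduct w x y) (gromovProduct w y z) - δ ≤ gromovProduct w x z

/-- An isometry `f` of `X` is hyperbolic if for every `x ∈ X` there is `t > 0` with
`t|m − n| ≤ d(f^m x, f^n x)` for all integers `m, n`. -/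
def IsHyperbolicIsometry (f : X ≃ᵢ X) : Prop :=
  ∀ x : X, ∃ t : ℝ, 0 < t ∧
    ∀ m n : ℤ, t * |(m : ℝ) - (n : ℝ)| ≤ dist ((f ^ m) x) ((f ^ n) x)

/-- A sequence converges to infinity if the Gromov products `(x_i·x_j)_w → ∞`. -/
def ConvergesToInfinity (w : X) (u : ℕ → X) : Prop :=
  Tendsto (fun p : ℕ × ℕ => gromovProduct w (u p.1) (u p.2)) atTop atTop

/-- Two sequences are equivalent if the mixed Gromov products tend to infinity. -/
def SeqEquiv (w : X) (u v : ℕ → X) : Prop :=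
  Tendsto (fun p : ℕ × ℕ => gromovProduct w (u p.1) (v p.2)) atTop atTop

/-- Sequences converging to infinity. -/
def BoundarySeq (w : X) : Type u := {u : ℕ → X // ConvergesToInfinity w u}

/-- The Gromov boundary `∂X`: equivalence classes of sequences converging to infinity. -/
def GromovBoundary (w : X) : Type u :=
  Quot (fun u v : BoundarySeq w => SeqEquiv w u.1 v.1)

/-- The boundary point determined by a sequence converging to infinity. -/
def boundaryPt (w : X) (u : BoundarySeq w) : GromovBoundary w := Quot.mk _ u

/-- `X̄ = X ∪ ∂X`. -/
def GromovClosure (w : X) : Type u := X ⊕ GromovBoundary w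

theorem gromovProduct_basepoint_ge (w w' x y : X) :
    gromovProduct w x y - dist w w' ≤ gromovProduct w' x y := by
  have h1 : |dist w' x - dist w x| ≤ dist w' w := abs_dist_sub_le w' w x
  have h2 : |dist w' y - dist w y| ≤ dist w' w := abs_dist_sub_le w' w y
  rw [abs_le] at h1 h2
  unfold gromovProduct
  rw [dist_comm x w', dist_comm x w, dist_comm w w']
  linarith [h1.1, h1.2, h2.1, h2.2]

theorem gromovProduct_isometry (f : X ≃ᵢ X) (w x y : X) :
    gromovProduct w (f x) (f y) = gromovProduct (f.symm w) x y := by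
  unfold gromovProduct
  conv_lhs => rw [show w = f (f.symm w) from (f.apply_symm_apply w).symm]
  rw [f.dist_eq, f.dist_eq, f.dist_eq]

theorem convergesToInfinity_isometry {w : X} (f : X ≃ᵢ X) {u : ℕ → X}
    (h : ConvergesToInfinity w u) :
    ConvergesToInfinity w (fun n => f (u n)) := by
  refine tendsto_atTop_mono (fun p => ?_)
    (tendsto_atTop_add_const_right atTop (-dist w (f.symm w)) h)
  have h1 := gromovProduct_basepoint_ge w (f.symm w) (u p.1) (u p.2)
  have h2 := gromovProduct_isometry f w (u p.1) (u p.2)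
  dsimp only
  linarith

theorem seqEquiv_isometry {w : X} (f : X ≃ᵢ X) {u v : ℕ → X}
    (h : SeqEquiv w u v) :
    SeqEquiv w (fun n => f (u n)) (fun n => f (v n)) := by
  refine tendsto_atTop_mono (fun p => ?_)
    (tendsto_atTop_add_const_right atTop (-dist w (f.symm w)) h)
  have h1 := gromovProduct_basepoint_ge w (f.symm w) (u p.1) (v p.2)
  have h2 := gromovProduct_isometry f w (u p.1) (v p.2)
  dsimp only
  linarith

/-- The extension of an isometry of `X` to the Gromov boundary. -/
def boundaryMap (w : X) (f : X ≃ᵢ X) : GromovBoundary w → GromovBoundary w :=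
  Quot.lift
    (fun u : BoundarySeq w =>
      boundaryPt w ⟨fun n => f (u.1 n), convergesToInfinity_isometry f u.2⟩)
    (fun _ _ h => Quot.sound (seqEquiv_isometry f h))

/-- The extension of an isometry of `X` to `X̄ = X ∪ ∂X`. -/
def closureMap (w : X) (f : X ≃ᵢ X) : GromovClosure w → GromovClosure w
  | Sum.inl x => Sum.inl (f x)
  | Sum.inr a => Sum.inr (boundaryMap w f a)

/-- The Gromov product of a boundary point with a point of `X̄`, extended by
taking infima of liminfs over representative sequences. -/
noncomputable def boundaryGP (w : X) (a : GromovBoundary w) : GromovClosure w → ℝ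
  | Sum.inl p => sInf {r : ℝ | ∃ u : BoundarySeq w, boundaryPt w u = a ∧
      r = Filter.liminf (fun n => gromovProduct w (u.1 n) p) atTop}
  | Sum.inr b => sInf {r : ℝ | ∃ u v : BoundarySeq w, boundaryPt w u = a ∧
      boundaryPt w v = b ∧
      r = Filter.liminf (fun n => gromovProduct w (u.1 n) (v.1 n)) atTop}

/-- The basis for the topology on `X̄`: open balls in `X`, and the sets
`N(â,k) = {y : (â·y)_w > k}` for boundary points `â` and `k > 0`. -/
def closureBasis (w : X) : Set (Set (GromovClosure w)) :=
  {S | (∃ (x : X) (r : ℝ), 0 < r ∧ S = Sum.inl '' Metric.ball x r) ∨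
       (∃ (a : GromovBoundary w) (k : ℝ), 0 < k ∧ S = {y | k < boundaryGP w a y})}

/-- The topology on `X̄` generated by the basis above. -/
def closureTop (w : X) : TopologicalSpace (GromovClosure w) :=
  TopologicalSpace.generateFrom (closureBasis w)

/-- `S ⊆ X̄` is a neighborhood of `p ∈ X̄`. -/
def IsNeighborhood (w : X) (S : Set (GromovClosure w)) (p : GromovClosure w) : Prop :=
  S ∈ @nhds (GromovClosure w) (closureTop w) p

/-- `a ∈ ∂X` is the attracting fixed point of `f`: it is represented by the
sequence `(f^n x)` for a point `x ∈ X`. -/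
def IsAttractingFixedPt (w : X) (f : X ≃ᵢ X) (a : GromovBoundary w) : Prop :=
  ∃ (x : X) (h : ConvergesToInfinity w (fun n : ℕ => (f ^ (n : ℤ)) x)),
    boundaryPt w ⟨fun n : ℕ => (f ^ (n : ℤ)) x, h⟩ = a

/-- `a ∈ ∂X` is the repelling fixed point of `f`: the attracting fixed point of `f⁻¹`. -/
def IsRepellingFixedPt (w : X) (f : X ≃ᵢ X) (a : GromovBoundary w) : Prop :=
  IsAttractingFixedPt w f⁻¹ a

/-- The concatenation `α · (f α)` of a path `α` defined on `[0, L]` with its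
image under `f`, parametrized on `[0, 2L]`. -/
noncomputable def concatPath (f : X ≃ᵢ X) (α : ℝ → X) (L : ℝ) : ℝ → X :=
  fun s => if s ≤ L then α s else f (α (s - L))


section GromovProduct

variable (w x y z : X)

theorem gromovProduct_nonneg : 0 ≤ gromovProduct w x y := by
  have := dist_triangle x w y
  unfold gromovProduct
  linarith

theorem gromovProduct_comm : gromovProduct w x y = gromovProduct w y x := by
  unfold gromovProduct
  rw [dist_comm x w, dist_comm w y, dist_comm x y]
  ring

theorem gromovProduct_le_dist : gromovProduct w x y ≤ dist w y := by
  have := dist_triangle_right x w y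
  unfold gromovProduct
  linarith

theorem gromovProduct_sub_dist_le : gromovProduct w x z - dist x y ≤ gromovProduct w y z := by
  have h1 := abs_dist_sub_le x y w
  have h2 := abs_dist_sub_le y x z
  rw [abs_le, dist_comm y x] at *
  unfold gromovProduct
  linarith [h1.1, h1.2, h2.1, h2.2]

variable {w x y z}

theorem sub_two_mul_dist_le_two_mul_gromovProduct (h : dist x z ≤ dist y z) :
    dist x y - 2 * dist y w ≤ 2 * gromovProduct w x z := by
  have := dist_triangle x w y
  have := dist_triangle y w z
  unfold gromovProduct
  rw [dist_comm w y] at *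
  linarith

theorem IsDeltaHyperbolic.le_gromovProduct {δ K : ℝ} (hX : IsDeltaHyperbolic X δ)
    (hxy : K + δ ≤ gromovProduct w x y) (hyz : K + δ ≤ gromovProduct w y z) :
    K ≤ gromovProduct w x z := by
  linarith [hX.gromov w x y z, le_min hxy hyz]

end GromovProduct

section Sequences

variable {δ : ℝ} {w : X} {u v s : ℕ → X}

theorem seqEquiv_iff :
    SeqEquiv w u v ↔ ∀ K : ℝ, ∃ N, ∀ i ≥ N, ∀ j ≥ N, K ≤ gromovProduct w (u i) (v j) := by
  simp only [SeqEquiv, Filter.tendsto_atTop, eventually_atTop_prod_self']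

theorem convergesToInfinity_iff_seqEquiv : ConvergesToInfinity w u ↔ SeqEquiv w u u :=
  Iff.rfl

theorem SeqEquiv.symm (h : SeqEquiv w u v) : SeqEquiv w v u := by
  rw [seqEquiv_iff] at h ⊢
  intro K
  obtain ⟨N, hN⟩ := h K
  exact ⟨N, fun i hi j hj => gromovProduct_comm w (u j) (v i) ▸ hN j hj i hi⟩

theorem SeqEquiv.trans (h₁ : SeqEquiv w u v) (hX : IsDeltaHyperbolic X δ)
    (h₂ : SeqEquiv w v s) : SeqEquiv w u s := by
  rw [seqEquiv_iff] at h₁ h₂ ⊢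
  intro K
  obtain ⟨N₁, hN₁⟩ := h₁ (K + δ)
  obtain ⟨N₂, hN₂⟩ := h₂ (K + δ)
  refine ⟨max N₁ N₂, fun i hi j hj => hX.le_gromovProduct (y := v (max N₁ N₂)) ?_ ?_⟩
  · exact hN₁ i (le_of_max_le_left hi) _ (le_max_left _ _)
  · exact hN₂ _ (le_max_right _ _) j (le_of_max_le_right hj)

theorem SeqEquiv.convergesToInfinity_right (h : SeqEquiv w u v)
    (hX : IsDeltaHyperbolic X δ) : ConvergesToInfinity w v :=
  convergesToInfinity_iff_seqEquiv.mpr (h.symm.trans hX h)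

theorem SeqEquiv.of_dist_le_right {v' : ℕ → X} {C : ℝ} (h : SeqEquiv w u v)
    (hv : ∀ n, dist (v n) (v' n) ≤ C) : SeqEquiv w u v' := by
  refine tendsto_atTop_mono (fun p => ?_) (tendsto_atTop_add_const_right _ (-C) h)
  have := gromovProduct_sub_dist_le w (v p.2) (v' p.2) (u p.1)
  rw [gromovProduct_comm w (v p.2), gromovProduct_comm w (v' p.2)] at this
  linarith [hv p.2]

theorem convergesToInfinity_comp {φ : ℕ → ℕ} (hu : ConvergesToInfinity w u)
    (hφ : Tendsto φ atTop atTop) : ConvergesToInfinity w (u ∘ φ) :=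
  Tendsto.comp hu (hφ.prod_atTop hφ)

theorem seqEquiv_comp {φ : ℕ → ℕ} (hu : ConvergesToInfinity w u)
    (hφ : Tendsto φ atTop atTop) : SeqEquiv w u (u ∘ φ) :=
  Tendsto.comp hu (tendsto_id.prod_atTop hφ)

theorem seqEquiv_of_tendsto_gromovProduct (hX : IsDeltaHyperbolic X δ)
    (hu : ConvergesToInfinity w u) {l : ℕ → ℕ} (hl : Tendsto l atTop atTop)
    (h : Tendsto (fun j => gromovProduct w (u (l j)) (v j)) atTop atTop) : SeqEquiv w u v := by
  rw [seqEquiv_iff]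
  intro K
  obtain ⟨N₁, hN₁⟩ := seqEquiv_iff.mp (convergesToInfinity_iff_seqEquiv.mp hu) (K + δ)
  obtain ⟨N₂, hN₂⟩ := eventually_atTop.mp
    ((hl.eventually_ge_atTop N₁).and (h.eventually_ge_atTop (K + δ)))
  refine ⟨max N₁ N₂, fun i hi j hj => ?_⟩
  obtain ⟨hlj, hj'⟩ := hN₂ j (le_of_max_le_right hj)
  exact hX.le_gromovProduct (hN₁ i (le_of_max_le_left hi) (l j) hlj) hj'

theorem exists_diagonal_seqEquiv (hX : IsDeltaHyperbolic X δ) (hu : ConvergesToInfinity w u)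
    {v : ℕ → ℕ → X} (hv : ∀ n, SeqEquiv w u (v n)) {P : ℕ → ℕ → Prop}
    (hP : ∀ n, ∃ᶠ i in atTop, P n i) :
    ∃ i : ℕ → ℕ, (∀ n, P n (i n)) ∧ SeqEquiv w u (fun n => v n (i n)) := by
  choose B hB using fun n => seqEquiv_iff.mp (hv n) n
  choose i hiB hiP using fun n => frequently_atTop.mp (hP n) (B n)
  refine ⟨i, hiP, seqEquiv_of_tendsto_gromovProduct hX hu (l := fun n => max (B n) n)
    (tendsto_atTop_mono (fun n => le_max_right _ _) tendsto_id) ?_⟩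
  refine tendsto_atTop_mono (fun n => ?_) tendsto_natCast_atTop_atTop
  exact hB n _ (le_max_left _ _) _ (hiB n)

theorem boundaryPt_eq_of_seqEquiv {w : X} {u v : BoundarySeq w} (h : SeqEquiv w u.1 v.1) :
    boundaryPt w u = boundaryPt w v :=
  Quot.sound h

theorem seqEquiv_of_boundaryPt_eq (hX : IsDeltaHyperbolic X δ) {u v : BoundarySeq w}
    (h : boundaryPt w u = boundaryPt w v) : SeqEquiv w u.1 v.1 := by
  have hgen := Quot.eq.mp h
  clear h
  induction hgen with
  | rel a b hab => exact hab
  | refl a => exact convergesToInfinity_iff_seqEquiv.mp a.2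
  | symm a b _ ih => exact ih.symm
  | trans a b c _ _ ih₁ ih₂ => exact ih₁.trans hX ih₂

end Sequences

theorem IsAttractingFixedPt.orbit {w : X} {g : X ≃ᵢ X} {a : GromovBoundary w}
    (h : IsAttractingFixedPt w g a) (x : X) :
    ∃ hx : ConvergesToInfinity w (fun n : ℕ => (g ^ (n : ℤ)) x),
      boundaryPt w ⟨fun n : ℕ => (g ^ (n : ℤ)) x, hx⟩ = a := by
  obtain ⟨x₀, h₀, rfl⟩ := h
  have hd : ∀ n : ℕ, dist ((g ^ (n : ℤ)) x₀) ((g ^ (n : ℤ)) x) ≤ dist x₀ x :=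
    fun n => ((g ^ (n : ℤ)).dist_eq x₀ x).le
  have hequiv : SeqEquiv w (fun n : ℕ => (g ^ (n : ℤ)) x₀) (fun n : ℕ => (g ^ (n : ℤ)) x) :=
    (convergesToInfinity_iff_seqEquiv.mp h₀).of_dist_le_right hd
  have hconv : ConvergesToInfinity w (fun n : ℕ => (g ^ (n : ℤ)) x) :=
    convergesToInfinity_iff_seqEquiv.mpr (hequiv.symm.of_dist_le_right hd)
  exact ⟨hconv, boundaryPt_eq_of_seqEquiv (u := ⟨_, hconv⟩) (v := ⟨_, h₀⟩) hequiv.symm⟩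

theorem dist_le_of_eq_sInf {ι : Type*} (p : ι → X) {z : X} {m : ι}
    (h : dist (p m) z = sInf {d : ℝ | ∃ k, d = dist (p k) z}) (k : ι) :
    dist (p m) z ≤ dist (p k) z :=
  h ▸ csInf_le ⟨0, by rintro _ ⟨_, rfl⟩; exact dist_nonneg⟩ ⟨k, rfl⟩

section Closure

variable {δ : ℝ} {w : X} {a : GromovBoundary w}

theorem boundaryGP_inr_le {u v : BoundarySeq w} (hu : boundaryPt w u = a) :
    boundaryGP w a (Sum.inr (boundaryPt w v)) ≤
      liminf (fun n => gromovProduct w (u.1 n) (v.1 n)) atTop := by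
  unfold boundaryGP
  refine csInf_le ⟨0, ?_⟩ ⟨u, v, hu, rfl, rfl⟩
  rintro _ ⟨_, _, _, _, rfl⟩
  exact Real.sSup_nonneg' ⟨0, .of_forall fun n => gromovProduct_nonneg _ _ _, le_rfl⟩

theorem exists_frequently_gromovProduct_lt {p : X} {c : ℝ}
    (h : boundaryGP w a (Sum.inl p) < c) :
    ∃ u : BoundarySeq w, boundaryPt w u = a ∧ ∃ᶠ i in atTop, gromovProduct w (u.1 i) p < c := by
  obtain ⟨u₀, rfl⟩ := Quot.exists_rep a
  unfold boundaryGP at h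
  obtain ⟨_, ⟨u, hu, rfl⟩, hlt⟩ := exists_lt_of_csInf_lt (by exact ⟨_, u₀, rfl, rfl⟩) h
  exact ⟨u, hu, frequently_lt_of_liminf_lt
    (isCoboundedUnder_ge_of_le _ fun i => gromovProduct_le_dist _ _ _) hlt⟩

/-- Since `boundaryGP` is an infimum over representatives, the bounds at the points `y n` are
witnessed by different representatives of `a`; a diagonal one witnesses the bound at the limit. -/
theorem boundaryGP_inr_le_of_forall_lt (hX : IsDeltaHyperbolic X δ) {y : BoundarySeq w}
    {c : ℝ} (h : ∀ n, boundaryGP w a (Sum.inl (y.1 n)) < c) :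
    boundaryGP w a (Sum.inr (boundaryPt w y)) ≤ c := by
  obtain ⟨u₀, rfl⟩ := Quot.exists_rep a
  choose u hu hfreq using fun n => exists_frequently_gromovProduct_lt (h n)
  obtain ⟨i, hi, hequiv⟩ := exists_diagonal_seqEquiv hX u₀.2
    (fun n => seqEquiv_of_boundaryPt_eq hX (hu n).symm) hfreq
  let U : BoundarySeq w := ⟨_, hequiv.convergesToInfinity_right hX⟩
  calc boundaryGP w _ (Sum.inr (boundaryPt w y))
      ≤ liminf (fun n => gromovProduct w (U.1 n) (y.1 n)) atTop :=
        boundaryGP_inr_le (boundaryPt_eq_of_seqEquiv (u := U) (v := u₀) hequiv.symm)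
    _ ≤ c := liminf_le_of_frequently_le (.of_forall fun n => (hi n).le)
        (isBoundedUnder_of ⟨0, fun n => gromovProduct_nonneg _ _ _⟩)

theorem eventually_lt_boundaryGP_inl (hX : IsDeltaHyperbolic X δ) {z : BoundarySeq w} {k : ℝ}
    (h : k < boundaryGP w a (Sum.inr (boundaryPt w z))) :
    ∀ᶠ j in atTop, k < boundaryGP w a (Sum.inl (z.1 j)) := by
  obtain ⟨c, hkc, hc⟩ := exists_between h
  by_contra hfreq
  obtain ⟨φ, hφ, hle⟩ := extraction_of_frequently_atTop
    ((not_eventually.mp hfreq).mono fun _ => not_lt.mp)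
  have hφ' : Tendsto φ atTop atTop := hφ.tendsto_atTop
  have hsub : boundaryPt w z = boundaryPt w ⟨z.1 ∘ φ, convergesToInfinity_comp z.2 hφ'⟩ :=
    boundaryPt_eq_of_seqEquiv (seqEquiv_comp z.2 hφ')
  rw [hsub] at hc
  exact hc.not_ge (boundaryGP_inr_le_of_forall_lt hX fun n => (hle n).trans_lt hkc)

theorem tendsto_inl_nhds_boundaryPt (hX : IsDeltaHyperbolic X δ) (z : BoundarySeq w) :
    Tendsto (fun j => (Sum.inl (z.1 j) : GromovClosure w)) atTop
      (@nhds _ (closureTop w) (Sum.inr (boundaryPt w z))) := by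
  refine TopologicalSpace.tendsto_nhds_generateFrom_iff.mpr ?_
  rintro s (⟨_, _, -, rfl⟩ | ⟨a, k, -, rfl⟩) hs
  · obtain ⟨_, -, h⟩ := hs
    exact absurd h Sum.inl_ne_inr
  · exact eventually_lt_boundaryGP_inl hX hs

end Closure

theorem tendsto_inl_nhds_of_nearest_backward_orbit {δ : ℝ} (hX : IsDeltaHyperbolic X δ)
    {w : X} {f : X ≃ᵢ X} (hf : IsHyperbolicIsometry f) {Aminus : GromovBoundary w}
    (hAm : IsRepellingFixedPt w f Aminus) (x : X) {z : ℕ → X} {n : ℕ → ℕ}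
    (hn : Tendsto n atTop atTop)
    (hz : ∀ j, dist ((f ^ (-(n j : ℤ))) x) (z j) =
      sInf {d : ℝ | ∃ k : ℤ, d = dist ((f ^ k) x) (z j)}) :
    Tendsto (fun j => (Sum.inl (z j) : GromovClosure w)) atTop
      (@nhds _ (closureTop w) (Sum.inr Aminus)) := by
  obtain ⟨t, ht, hdist⟩ := hf x
  obtain ⟨hv, hvA⟩ := IsAttractingFixedPt.orbit hAm x
  have hgp : ∀ j, t * n j - 2 * dist x w ≤ 2 * gromovProduct w ((f⁻¹ ^ (n j : ℤ)) x) (z j) := by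
    intro j
    have hnear : dist ((f ^ (-(n j : ℤ))) x) (z j) ≤ dist x (z j) := by
      simpa using dist_le_of_eq_sInf (fun k => (f ^ k) x) (hz j) 0
    have hfar : t * n j ≤ dist ((f ^ (-(n j : ℤ))) x) x := by simpa using hdist (-(n j)) 0
    rw [← inv_zpow'] at hnear hfar
    linarith [sub_two_mul_dist_le_two_mul_gromovProduct (w := w) hnear]
  have hequiv : SeqEquiv w (fun n : ℕ => (f⁻¹ ^ (n : ℤ)) x) z :=
    seqEquiv_of_tendsto_gromovProduct hX hv hn <|
    tendsto_atTop_mono (fun j => by dsimp only [Function.comp_apply]; linarith [hgp j]) <|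
      (tendsto_atTop_add_const_right _ (-(2 * dist x w))
        ((tendsto_natCast_atTop_atTop.comp hn).const_mul_atTop ht)).atTop_div_const two_pos
  let zs : BoundarySeq w := ⟨z, hequiv.convergesToInfinity_right hX⟩
  rw [← hvA, boundaryPt_eq_of_seqEquiv (u := ⟨_, hv⟩) (v := zs) hequiv]
  exact tendsto_inl_nhds_boundaryPt hX zs

/-- For a hyperbolic isometry `f` with repelling fixed point `A₋`
and a neighborhood `U₋` of `A₋` in `X̄`, there is `M₀ ∈ ℤ` such that whenever
`z ∉ U₋` and `f^m x` is a point of the orbit `A = {fⁿx}` nearest to `z`,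
we have `m ≥ M₀`. -/
theorem nearest_orbit_point_bounded_below (δ : ℝ) (hX : IsDeltaHyperbolic X δ) (w : X)
    (f : X ≃ᵢ X) (hf : IsHyperbolicIsometry f)
    (Aminus : GromovBoundary w) (hAm : IsRepellingFixedPt w f Aminus)
    (x : X)
    (Uminus : Set (GromovClosure w))
    (hUm : IsNeighborhood w Uminus (Sum.inr Aminus)) :
    ∃ M0 : ℤ, ∀ z : X, Sum.inl z ∉ Uminus →
      ∀ m : ℤ,
        dist ((f ^ m) x) z = sInf {d : ℝ | ∃ k : ℤ, d = dist ((f ^ k) x) z} →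
        M0 ≤ m := by
  by_contra! hcon
  choose z hzU m hm hmj using fun j : ℕ => hcon (-(j : ℤ))
  have hmn : ∀ j, -((-(m j)).toNat : ℤ) = m j := fun j => by have := hmj j; omega
  have hn : Tendsto (fun j => (-(m j)).toNat) atTop atTop :=
    tendsto_atTop_mono (fun j => show j ≤ _ by have := hmj j; omega) tendsto_id
  have hz := tendsto_inl_nhds_of_nearest_backward_orbit hX hf hAm x hn
    fun j => (hmn j).symm ▸ hm j
  obtain ⟨j, hj⟩ := (hz.eventually_mem hUm).exists
  exact hzU j hj
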